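/- Let I_l^0 > 0 be target rates and P_T > 0. Suppose Σ̃_{1:L} is a family of positive semidefinite input covariance matrices with ∑_l Tr(Σ̃_l) ≤ P_T that solves the feasibility optimization problem FOP, i.e., min_{1≤l≤L} I_l(Σ̃_{1:L}, Φ)/I_l^0 ≥ min_{1≤l≤L} I_l(Σ_{1:L}, Φ)/I_l^0 for every positive semidefinite Σ_{1:L} with ∑_l Tr(Σ_l) ≤ P_T, and suppose the optimal value α := min_l I_l(Σ̃_{1:L}, Φ)/I_l^0 is strictly positive. Then the optimum uses full power: ∑_{l=1}^L Tr(Σ̃_l) = P_T. -/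

import Mathlib

open Matrix BigOperators
open scoped ComplexOrder

/-- Interference-plus-noise covariance `Ω_l = I + ∑ₖ Φ_{l,k} H_{l,k} Σ_k H_{l,k}ᴴ`
of link `l` in a B-MAC network. -/
noncomputable def interfCov {L : ℕ} (nT nR : Fin L → ℕ)
    (H : ∀ l k : Fin L, Matrix (Fin (nR l)) (Fin (nT k)) ℂ)
    (Φ : Fin L → Fin L → ℝ)
    (S : ∀ l : Fin L, Matrix (Fin (nT l)) (Fin (nT l)) ℂ) (l : Fin L) :
    Matrix (Fin (nR l)) (Fin (nR l)) ℂ :=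
  1 + ∑ k : Fin L, (Φ l k : ℂ) • (H l k * S k * (H l k)ᴴ)

/-- Achievable rate `I_l(Σ_{1:L}, Φ) = log det(I + H_{l,l} Σ_l H_{l,l}ᴴ Ω_l⁻¹)` of link `l`. -/
noncomputable def linkRate {L : ℕ} (nT nR : Fin L → ℕ)
    (H : ∀ l k : Fin L, Matrix (Fin (nR l)) (Fin (nT k)) ℂ)
    (Φ : Fin L → Fin L → ℝ)
    (S : ∀ l : Fin L, Matrix (Fin (nT l)) (Fin (nT l)) ℂ) (l : Fin L) : ℝ :=
  Real.log ((1 + H l l * S l * (H l l)ᴴ * (interfCov nT nR H Φ S l)⁻¹).det.re)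

/-!
If the power budget were not exhausted, scaling every covariance by `β = P_T / ∑ Tr Σ̃_l > 1`
would stay feasible. Scaling signal and interference of a link by `β` is the same as lowering its
noise from `I` to `β⁻¹ I`, and `(β⁻¹ I + B)⁻¹ - (I + B)⁻¹` is positive definite; writing the rate
as `log det (I + √A Ω⁻¹ √A)` with `A = H Σ Hᴴ ≠ 0` (forced by `α > 0`), every rate strictly
increases. So does the minimum of the normalized rates, contradicting optimality.
-/

open scoped MatrixOrder

namespace Matrix

variable {n 𝕜 : Type*} [Fintype n] [RCLike 𝕜]

theorem PosDef.mul_mul_conjTranspose_ne_zero {m : Type*} [Fintype m] {D : Matrix n n 𝕜}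
    (hD : D.PosDef) {s : Matrix m n 𝕜} (hs : s ≠ 0) : s * D * sᴴ ≠ 0 := by
  classical
  obtain ⟨x, hx⟩ : ∃ x, sᴴ *ᵥ x ≠ 0 := by
    by_contra! h
    exact hs (conjTranspose_eq_zero.mp (ext_of_mulVec_single fun i => by rw [h, zero_mulVec]))
  intro h
  have := hD.dotProduct_mulVec_pos hx
  simp only [star_mulVec, dotProduct_mulVec, vecMul_vecMul, conjTranspose_conjTranspose, h,
    vecMul_zero, zero_dotProduct, lt_self_iff_false] at this

variable [DecidableEq n]

theorem one_lt_det_one_add {T : Matrix n n 𝕜} (hT : T.PosSemidef) (hT0 : T ≠ 0) :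
    1 < (1 + T).det := by
  obtain ⟨j, hj⟩ : ∃ j, hT.1.eigenvalues j ≠ 0 := by
    by_contra! h
    exact hT0 (hT.1.eigenvalues_eq_zero_iff.mp (funext h))
  rw [hT.1.spectral_theorem, ← map_one (Unitary.conjStarAlgAut 𝕜 _ hT.1.eigenvectorUnitary),
    ← map_add, ← diagonal_one, diagonal_add]
  simp only [Unitary.conjStarAlgAut_apply, det_mul_right_comm,
    Unitary.mul_star_self_of_mem hT.1.eigenvectorUnitary.2, one_mul, det_diagonal,
    Function.comp_apply]
  have hnn i : (0 : 𝕜) ≤ hT.1.eigenvalues i :=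
    RCLike.ofReal_nonneg.mpr (hT.eigenvalues_nonneg i)
  calc (1 : 𝕜) = ∏ _i : n, 1 := Finset.prod_const_one.symm
    _ < _ := Finset.prod_lt_prod (fun _ _ => zero_lt_one)
        (fun i _ => le_add_of_nonneg_right (hnn i))
        ⟨j, Finset.mem_univ j, lt_add_of_pos_right _ ((hnn j).lt_of_ne' (by exact_mod_cast hj))⟩

theorem PosSemidef.det_one_add_mul_eq_det_one_add_sqrt_mul_mul_sqrt {A : Matrix n n 𝕜}
    (hA : A.PosSemidef) (M : Matrix n n 𝕜) :
    (1 + A * M).det = (1 + CFC.sqrt A * M * CFC.sqrt A).det := by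
  conv_lhs => rw [← CFC.sqrt_mul_sqrt_self A hA.nonneg, mul_assoc]
  rw [det_one_add_mul_comm]

theorem PosSemidef.sqrt_mul_mul_sqrt {M : Matrix n n 𝕜} (hM : M.PosSemidef) (A : Matrix n n 𝕜) :
    (CFC.sqrt A * M * CFC.sqrt A).PosSemidef := by
  simpa [(CFC.sqrt_nonneg A).posSemidef.1.eq] using hM.mul_mul_conjTranspose_same (CFC.sqrt A)

theorem PosSemidef.det_one_add_mul_pos {A M : Matrix n n 𝕜} (hA : A.PosSemidef)
    (hM : M.PosSemidef) : 0 < (1 + A * M).det := by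
  rw [hA.det_one_add_mul_eq_det_one_add_sqrt_mul_mul_sqrt]
  exact (PosDef.one.add_posSemidef (hM.sqrt_mul_mul_sqrt A)).det_pos

theorem det_one_add_lt_det_one_add_add {X R : Matrix n n 𝕜} (hX : X.PosSemidef)
    (hR : R.PosSemidef) (hR0 : R ≠ 0) : (1 + X).det < (1 + X + R).det := by
  have hN : (1 + X).PosDef := PosDef.one.add_posSemidef hX
  have hsqrt : CFC.sqrt R ≠ 0 := mt (CFC.sqrt_eq_zero_iff R hR.nonneg).mp hR0
  have hfactor : 1 + X + R = (1 + X) * (1 + (1 + X)⁻¹ * R) := by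
    rw [mul_add, mul_one, ← mul_assoc, mul_nonsing_inv _ hN.det_pos.ne'.isUnit, one_mul]
  rw [hfactor, det_mul, det_one_add_mul_comm,
    hR.det_one_add_mul_eq_det_one_add_sqrt_mul_mul_sqrt]
  refine lt_mul_of_one_lt_right hN.det_pos
    (one_lt_det_one_add (hN.inv.posSemidef.sqrt_mul_mul_sqrt R) ?_)
  simpa [(CFC.sqrt_nonneg R).posSemidef.1.eq] using hN.inv.mul_mul_conjTranspose_ne_zero hsqrt

theorem PosSemidef.det_one_add_mul_lt_det_one_add_mul_add {A M D : Matrix n n 𝕜}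
    (hA : A.PosSemidef) (hA0 : A ≠ 0) (hM : M.PosSemidef) (hD : D.PosDef) :
    (1 + A * M).det < (1 + A * (M + D)).det := by
  have hsqrt : CFC.sqrt A ≠ 0 := mt (CFC.sqrt_eq_zero_iff A hA.nonneg).mp hA0
  rw [hA.det_one_add_mul_eq_det_one_add_sqrt_mul_mul_sqrt,
    hA.det_one_add_mul_eq_det_one_add_sqrt_mul_mul_sqrt, mul_add, add_mul, ← add_assoc]
  refine det_one_add_lt_det_one_add_add (hM.sqrt_mul_mul_sqrt A)
    (hD.posSemidef.sqrt_mul_mul_sqrt A) ?_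
  simpa [(CFC.sqrt_nonneg A).posSemidef.1.eq] using hD.mul_mul_conjTranspose_ne_zero hsqrt

theorem PosSemidef.posDef_inv_smul_one_add_sub_inv_one_add {B : Matrix n n 𝕜}
    (hB : B.PosSemidef) {c : ℝ} (hc0 : 0 < c) (hc1 : c < 1) :
    ((c • 1 + B)⁻¹ - (1 + B)⁻¹).PosDef := by
  have hN₁ : (1 + B).PosDef := PosDef.one.add_posSemidef hB
  have hNc : (c • 1 + B).PosDef := (PosDef.one.smul hc0).add_posSemidef hB
  have hprod : ((1 + B) * (c • 1 + B)).PosDef := by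
    have hBB : (B * B).PosSemidef := by
      simpa [hB.1.eq] using posSemidef_self_mul_conjTranspose B
    have hexpand : (1 + B) * (c • 1 + B) = c • 1 + ((1 + c) • B + B * B) := by
      simp only [add_mul, mul_add, one_mul, mul_one, mul_smul_comm, add_smul, one_smul, smul_add]
      abel
    rw [hexpand]
    exact (PosDef.one.smul hc0).add_posSemidef ((hB.smul (by linarith)).add hBB)
  have hsub : 1 + B - (c • 1 + B) = (1 - c) • (1 : Matrix n n 𝕜) := by
    rw [sub_smul, one_smul]
    abel
  have hdiff : (c • 1 + B)⁻¹ - (1 + B)⁻¹ = (1 - c) • ((1 + B) * (c • 1 + B))⁻¹ := calc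
    _ = (c • 1 + B)⁻¹ * (1 + B - (c • 1 + B)) * (1 + B)⁻¹ := by
      rw [mul_sub, sub_mul, nonsing_inv_mul _ hNc.det_pos.ne'.isUnit, one_mul, mul_assoc,
        mul_nonsing_inv _ hN₁.det_pos.ne'.isUnit, mul_one]
    _ = _ := by rw [hsub, mul_smul_comm, mul_one, smul_mul_assoc, mul_inv_rev]
  rw [hdiff]
  exact hprod.inv.smul (by linarith)

theorem PosSemidef.det_one_add_mul_inv_lt_det_one_add_smul_mul_inv {A B : Matrix n n 𝕜}
    (hA : A.PosSemidef) (hA0 : A ≠ 0) (hB : B.PosSemidef) {β : ℝ} (hβ : 1 < β) :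
    (1 + A * (1 + B)⁻¹).det < (1 + β • A * (1 + β • B)⁻¹).det := by
  have hβ0 : β ≠ 0 := (zero_lt_one.trans hβ).ne'
  have hβinv : 0 < β⁻¹ := inv_pos.mpr (zero_lt_one.trans hβ)
  have hN : (β⁻¹ • 1 + B).PosDef := (PosDef.one.smul hβinv).add_posSemidef hB
  have hscale : β • A * (1 + β • B)⁻¹ = A * (β⁻¹ • 1 + B)⁻¹ := by
    have hfactor : 1 + β • B = β • (β⁻¹ • 1 + B) := by
      rw [smul_add, smul_smul, mul_inv_cancel₀ hβ0, one_smul]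
    have hinv : (β • (β⁻¹ • 1 + B))⁻¹ = β⁻¹ • (β⁻¹ • 1 + B)⁻¹ := inv_eq_right_inv <| by
      rw [smul_mul_smul_comm, mul_inv_cancel₀ hβ0, one_smul,
        mul_nonsing_inv _ hN.det_pos.ne'.isUnit]
    rw [hfactor, hinv, smul_mul_smul_comm, mul_inv_cancel₀ hβ0, one_smul]
  rw [hscale, ← add_sub_cancel (1 + B)⁻¹ (β⁻¹ • 1 + B)⁻¹]
  exact hA.det_one_add_mul_lt_det_one_add_mul_add hA0
    (PosDef.one.add_posSemidef hB).inv.posSemidef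
    (hB.posDef_inv_smul_one_add_sub_inv_one_add hβinv (inv_lt_one_of_one_lt₀ hβ))

end Matrix

theorem ciInf_lt_ciInf_of_forall_lt {ι α : Type*} [Finite ι] [Nonempty ι]
    [ConditionallyCompleteLinearOrder α] {f g : ι → α} (h : ∀ i, f i < g i) :
    ⨅ i, f i < ⨅ i, g i := by
  obtain ⟨i, hi⟩ := exists_eq_ciInf_of_finite (f := g)
  exact hi ▸ (ciInf_le (Finite.bddBelow_range f) i).trans_lt (h i)

section BMAC

variable {L : ℕ} {nT nR : Fin L → ℕ} {H : ∀ l k : Fin L, Matrix (Fin (nR l)) (Fin (nT k)) ℂ}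
  {Φ : Fin L → Fin L → ℝ} {S : ∀ l : Fin L, Matrix (Fin (nT l)) (Fin (nT l)) ℂ}

theorem posSemidef_sum_interference (hΦ : ∀ l k, 0 ≤ Φ l k) (hS : ∀ k, (S k).PosSemidef)
    (l : Fin L) : (∑ k, (Φ l k : ℂ) • (H l k * S k * (H l k)ᴴ)).PosSemidef :=
  posSemidef_sum _ fun k _ =>
    ((hS k).mul_mul_conjTranspose_same (H l k)).smul (Complex.zero_le_real.mpr (hΦ l k))

theorem interfCov_smul (β : ℝ) (l : Fin L) :
    interfCov nT nR H Φ (β • S) l = 1 + β • ∑ k, (Φ l k : ℂ) • (H l k * S k * (H l k)ᴴ) := by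
  rw [interfCov, Finset.smul_sum]
  congr 1
  refine Finset.sum_congr rfl fun k _ => ?_
  rw [Pi.smul_apply, Matrix.mul_smul, Matrix.smul_mul, smul_comm]

theorem linkRate_lt_linkRate_smul (hΦ : ∀ l k, 0 ≤ Φ l k) (hS : ∀ k, (S k).PosSemidef)
    {l : Fin L} (hA0 : H l l * S l * (H l l)ᴴ ≠ 0) {β : ℝ} (hβ : 1 < β) :
    linkRate nT nR H Φ S l < linkRate nT nR H Φ (β • S) l := by
  have hA := (hS l).mul_mul_conjTranspose_same (H l l)
  have hB := posSemidef_sum_interference (H := H) hΦ hS l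
  have hpos := hA.det_one_add_mul_pos (PosDef.one.add_posSemidef hB).inv.posSemidef
  have hlt := hA.det_one_add_mul_inv_lt_det_one_add_smul_mul_inv hA0 hB hβ
  have hsignal : H l l * (β • S) l * (H l l)ᴴ = β • (H l l * S l * (H l l)ᴴ) := by
    rw [Pi.smul_apply, Matrix.mul_smul, Matrix.smul_mul]
  rw [linkRate, linkRate, interfCov_smul, hsignal, interfCov]
  exact Real.log_lt_log (by simpa using (Complex.lt_def.mp hpos).1) (Complex.lt_def.mp hlt).1

end BMAC

theorem fop_full_power_general {L : ℕ} (nT nR : Fin L → ℕ)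
    (H : ∀ l k : Fin L, Matrix (Fin (nR l)) (Fin (nT k)) ℂ)
    (Φ : Fin L → Fin L → ℝ)
    (hΦ01 : ∀ l k, Φ l k = 0 ∨ Φ l k = 1)
    (I0 : Fin L → ℝ) (hI0 : ∀ l, 0 < I0 l)
    (PT : ℝ)
    (St : ∀ l : Fin L, Matrix (Fin (nT l)) (Fin (nT l)) ℂ)
    (hpsd : ∀ l, (St l).PosSemidef)
    (hpow : (∑ l : Fin L, (St l).trace).re ≤ PT)
    (hopt : ∀ S : ∀ l : Fin L, Matrix (Fin (nT l)) (Fin (nT l)) ℂ,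
      (∀ l, (S l).PosSemidef) → (∑ l : Fin L, (S l).trace).re ≤ PT →
      (⨅ l : Fin L, linkRate nT nR H Φ S l / I0 l) ≤
        ⨅ l : Fin L, linkRate nT nR H Φ St l / I0 l)
    (hα : 0 < ⨅ l : Fin L, linkRate nT nR H Φ St l / I0 l) :
    (∑ l : Fin L, (St l).trace).re = PT := by
  have : Nonempty (Fin L) := by
    by_contra h
    -- an infimum over an empty index type is `0`
    simp [not_nonempty_iff.mp h] at hα
  have hΦ l k : 0 ≤ Φ l k := by rcases hΦ01 l k with h | h <;> simp [h]
  have hrate l : 0 < linkRate nT nR H Φ St l :=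
    (div_pos_iff_of_pos_right (hI0 l)).mp (hα.trans_le (ciInf_le (Finite.bddBelow_range _) l))
  have hA0 l : H l l * St l * (H l l)ᴴ ≠ 0 := fun h => (hrate l).ne' (by simp [linkRate, h])
  have hT : 0 < (∑ l, (St l).trace).re := by
    have htr l : 0 < (St l).trace := (hpsd l).trace_nonneg.lt_of_ne'
      (mt (hpsd l).trace_eq_zero_iff.mp fun h => hA0 l (by simp [h]))
    simpa using (Complex.lt_def.mp (Finset.sum_pos (fun l _ => htr l) Finset.univ_nonempty)).1
  refine hpow.antisymm (not_lt.mp fun hlt => ?_)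
  set β := PT / (∑ l, (St l).trace).re
  have hβ : 1 < β := (one_lt_div hT).mpr hlt
  have hpowβ : (∑ l, ((β • St) l).trace).re = PT := by
    simp only [Pi.smul_apply, trace_smul, ← Finset.smul_sum, Complex.smul_re, smul_eq_mul]
    exact div_mul_cancel₀ _ hT.ne'
  refine not_le.mpr ?_ (hopt (β • St) (fun l => (hpsd l).smul (zero_lt_one.trans hβ).le) hpowβ.le)
  exact ciInf_lt_ciInf_of_forall_lt fun l =>
    div_lt_div_of_pos_right (linkRate_lt_linkRate_smul hΦ hpsd (hA0 l) hβ) (hI0 l)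

/-- At any optimum of the feasibility optimization problem FOP (maximizing
`min_l I_l(Σ_{1:L},Φ)/I_l⁰` under the sum power constraint `∑ Tr(Σ_l) ≤ P_T`) whose optimal
value `α` is strictly positive, the full power is used: `∑ Tr(Σ̃_l) = P_T`. -/
theorem fop_full_power {L : ℕ} (hL : 0 < L) (nT nR : Fin L → ℕ)
    (H : ∀ l k : Fin L, Matrix (Fin (nR l)) (Fin (nT k)) ℂ)
    (Φ : Fin L → Fin L → ℝ)
    (hΦ01 : ∀ l k, Φ l k = 0 ∨ Φ l k = 1) (hΦdiag : ∀ l, Φ l l = 0)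
    (I0 : Fin L → ℝ) (hI0 : ∀ l, 0 < I0 l)
    (PT : ℝ) (hPT : 0 < PT)
    (St : ∀ l : Fin L, Matrix (Fin (nT l)) (Fin (nT l)) ℂ)
    (hpsd : ∀ l, (St l).PosSemidef)
    (hpow : (∑ l : Fin L, (St l).trace).re ≤ PT)
    (hopt : ∀ S : ∀ l : Fin L, Matrix (Fin (nT l)) (Fin (nT l)) ℂ,
      (∀ l, (S l).PosSemidef) → (∑ l : Fin L, (S l).trace).re ≤ PT →
      (⨅ l : Fin L, linkRate nT nR H Φ S l / I0 l) ≤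
        ⨅ l : Fin L, linkRate nT nR H Φ St l / I0 l)
    (hα : 0 < ⨅ l : Fin L, linkRate nT nR H Φ St l / I0 l) :
    (∑ l : Fin L, (St l).trace).re = PT :=
  fop_full_power_general nT nR H Φ hΦ01 I0 hI0 PT St hpsd hpow hopt hα
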